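/- arXiv:2003.06852 — 2 statements merged into one kernel-verified Lean document; each statement's English description precedes it below -/
import Mathlib

section
/- Let d ≥ 2 and let M be a d×d positive semidefinite complex matrix (indices 0,...,d−1). Suppose for every pair of the d Fourier vectors v_t, v_s (where (v_t)_j = ω^{tj}, ω = e^{2πi/d}, t ≠ s) we have ⟨v_t, M v_s⟩ = 0, and additionally ⟨e_0, M e_{d−1}⟩ = ⟨e_{d−1}, M e_0⟩ = 0 and ⟨e_q, M e_{d−1}⟩ = ⟨e_{d−1}, M e_q⟩ = 0 for 1 ≤ q ≤ d−2. Then M is a scalar multiple of the identity matrix. -/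
/-!
The Fourier vectors diagonalise exactly the circulant matrices. With `F ζ = (ζ ^ (i * j))`, the
pairwise `M`-orthogonality of the Fourier vectors says that `D = F ω⁻¹ * M * F ω` is diagonal,
and `F ω * F ω⁻¹ = d` gives `d ^ 2 • M = F ω * D * F ω⁻¹`, whose entry `(j, k)` depends only on
`j - k` modulo `d`. A circulant matrix that vanishes off the diagonal in one column vanishes off
the diagonal everywhere, and the conditions on the column `e_{d-1}` say exactly this.
-/

open Matrix

section

variable {K : Type*} [Field K] {d : ℕ} {ζ : K}

def fourierMatrix (d : ℕ) (ζ : K) : Matrix (Fin d) (Fin d) K :=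
  of fun i j => ζ ^ ((i : ℕ) * j)

theorem fourierMatrix_apply (i j : Fin d) : fourierMatrix d ζ i j = ζ ^ ((i : ℕ) * j) := rfl

theorem IsPrimitiveRoot.sum_pow_mul_inv_pow (hζ : IsPrimitiveRoot ζ d) (a b : Fin d) :
    ∑ s : Fin d, ζ ^ ((a : ℕ) * s) * ζ⁻¹ ^ ((s : ℕ) * b) = if a = b then (d : K) else 0 := by
  have hζ0 : ζ ≠ 0 := hζ.ne_zero (Fin.pos a).ne'
  set η := ζ ^ (a : ℕ) * ζ⁻¹ ^ (b : ℕ) with hη_def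
  have hterm (s : Fin d) : ζ ^ ((a : ℕ) * s) * ζ⁻¹ ^ ((s : ℕ) * b) = η ^ (s : ℕ) := by
    rw [mul_pow, ← pow_mul, ← pow_mul, mul_comm (s : ℕ)]
  simp only [hterm, Fin.sum_univ_eq_sum_range (η ^ ·)]
  have hη : η = 1 ↔ a = b := by
    rw [hη_def, inv_pow, mul_inv_eq_one₀ (pow_ne_zero _ hζ0), Fin.ext_iff]
    exact ⟨hζ.pow_inj a.isLt b.isLt, congrArg _⟩
  split_ifs with hab
  · simp [hη.2 hab]
  · have hηd : η ^ d = 1 := by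
      rw [mul_pow, ← pow_mul, ← pow_mul, inv_pow, mul_comm (a : ℕ), mul_comm (b : ℕ), pow_mul,
        pow_mul, hζ.pow_eq_one]
      simp
    rw [geom_sum_eq (mt hη.1 hab), hηd, sub_self, zero_div]

theorem fourierMatrix_mul_fourierMatrix_inv (hζ : IsPrimitiveRoot ζ d) :
    fourierMatrix d ζ * fourierMatrix d ζ⁻¹ = (d : K) • 1 := by
  ext a b
  rw [mul_apply]
  simp only [fourierMatrix_apply]
  rw [hζ.sum_pow_mul_inv_pow]
  simp [one_apply]

theorem IsPrimitiveRoot.pow_val_sub (hζ : IsPrimitiveRoot ζ d) (j k : Fin d) :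
    ζ ^ ((j - k : Fin d) : ℕ) = ζ ^ (j : ℕ) * ζ⁻¹ ^ (k : ℕ) := by
  have : NeZero d := ⟨(Fin.pos j).ne'⟩
  have hζ0 : ζ ≠ 0 := hζ.ne_zero (NeZero.ne d)
  rw [inv_pow, eq_mul_inv_iff_mul_eq₀ (pow_ne_zero _ hζ0), ← pow_add,
    pow_eq_pow_mod _ hζ.pow_eq_one, ← Fin.val_add, sub_add_cancel]

theorem fourierMatrix_mul_diagonal_mul_fourierMatrix_inv (hζ : IsPrimitiveRoot ζ d)
    (D : Fin d → K) :
    fourierMatrix d ζ * diagonal D * fourierMatrix d ζ⁻¹ =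
      circulant fun r : Fin d => ∑ t, D t * ζ ^ ((t : ℕ) * r) := by
  ext j k
  rw [mul_apply]
  simp only [mul_diagonal, fourierMatrix_apply, circulant_apply]
  refine Finset.sum_congr rfl fun t _ => ?_
  rw [pow_mul' ζ (t : ℕ), hζ.pow_val_sub]
  ring

theorem exists_eq_circulant_of_isDiag_fourier [NeZero d] (hζ : IsPrimitiveRoot ζ d)
    {M : Matrix (Fin d) (Fin d) K} (hM : (fourierMatrix d ζ⁻¹ * M * fourierMatrix d ζ).IsDiag) :
    ∃ c, M = circulant c := by
  have hd : (d : K) ≠ 0 := hζ.neZero'.out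
  have hrecover :
      fourierMatrix d ζ * (fourierMatrix d ζ⁻¹ * M * fourierMatrix d ζ) * fourierMatrix d ζ⁻¹ =
        (d : K) ^ 2 • M := by
    simp only [← Matrix.mul_assoc, fourierMatrix_mul_fourierMatrix_inv hζ]
    simp only [Matrix.mul_assoc, fourierMatrix_mul_fourierMatrix_inv hζ]
    simp [smul_smul, sq]
  rw [← hM.diagonal_diag, fourierMatrix_mul_diagonal_mul_fourierMatrix_inv hζ] at hrecover
  rw [← inv_smul_eq_iff₀ (pow_ne_zero 2 hd), ← circulant_smul] at hrecover
  exact ⟨_, hrecover.symm⟩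

end

theorem Matrix.circulant_eq_smul_one_of_col_eq_zero {α n : Type*} [MulZeroOneClass α]
    [AddGroup n] [DecidableEq n] (c : n → α) (k : n) (h : ∀ i, i ≠ k → circulant c i k = 0) :
    circulant c = c 0 • 1 := by
  ext i j
  rw [circulant_apply, smul_apply, one_apply, smul_eq_mul]
  split_ifs with hij
  · rw [hij, sub_self, mul_one]
  · have hk : i - j + k ≠ k := by simpa [sub_eq_zero] using hij
    simpa using h _ hk

open ComplexOrder

theorem psd_orthogonality_conditions_force_scalar (d : ℕ) (hd : 2 ≤ d)
    (ω : ℂ) (hω : ω = Complex.exp (2 * Real.pi * Complex.I / d))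
    (v : Fin d → Fin d → ℂ) (hv : ∀ t j, v t j = ω ^ ((t : ℕ) * (j : ℕ)))
    (e : Fin d → Fin d → ℂ) (he : ∀ k j, e k j = if j = k then 1 else 0)
    (M : Matrix (Fin d) (Fin d) ℂ)
    (hfour : ∀ s t : Fin d, s ≠ t →
      ∑ j : Fin d, (starRingEnd ℂ) (v s j) * M.mulVec (v t) j = 0)
    (h0 : ∑ j : Fin d, (starRingEnd ℂ) (e ⟨0, by omega⟩ j) * M.mulVec (e ⟨d - 1, by omega⟩) j = 0)
    (hq : ∀ q : Fin d, 1 ≤ (q : ℕ) → (q : ℕ) ≤ d - 2 →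
      (∑ j : Fin d, (starRingEnd ℂ) (e q j) * M.mulVec (e ⟨d - 1, by omega⟩) j = 0) ∧
      (∑ j : Fin d, (starRingEnd ℂ) (e ⟨d - 1, by omega⟩ j) * M.mulVec (e q) j = 0)) :
    ∃ c : ℂ, M = c • (1 : Matrix (Fin d) (Fin d) ℂ) := by
  have : NeZero d := ⟨by omega⟩
  have hω_prim : IsPrimitiveRoot ω d := hω ▸ Complex.isPrimitiveRoot_exp d (NeZero.ne d)
  have hconj (n : ℕ) : starRingEnd ℂ (ω ^ n) = ω⁻¹ ^ n := by
    rw [map_pow, Complex.inv_eq_conj (hω_prim.norm'_eq_one (NeZero.ne d))]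
  have hdiag : (fourierMatrix d ω⁻¹ * M * fourierMatrix d ω).IsDiag := by
    intro s t hst
    rw [← hfour s t hst, Matrix.mul_assoc, mul_apply]
    simp [hv, hconj, fourierMatrix_apply, mul_apply, mulVec, dotProduct, mul_comm]
  have hentry (a b : Fin d) : ∑ j, starRingEnd ℂ (e a j) * M.mulVec (e b) j = M a b := by
    simp [he, mulVec, dotProduct]
  obtain ⟨c, rfl⟩ := exists_eq_circulant_of_isDiag_fourier hω_prim hdiag
  refine ⟨c 0, circulant_eq_smul_one_of_col_eq_zero c ⟨d - 1, by omega⟩ fun i hi => ?_⟩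
  rw [← hentry]
  obtain ⟨_ | i, hi_lt⟩ := i
  · exact h0
  · have hi' : i + 1 ≠ d - 1 := fun h => hi (Fin.ext h)
    exact (hq ⟨i + 1, hi_lt⟩ (Nat.le_add_left 1 i) (show i + 1 ≤ d - 2 by omega)).1
end

section
/- Let d ≥ 2, n ≥ 3, and ω = e^{2πi/d}. The 2n(d−1) product states of Theorem 1 in (ℂ^d)^{⊗n} — namely, for each cyclic position δ ∈ {1,...,n} and t ∈ {0,...,d−1}, the state with Σ_j ω^{tj}|j⟩ in slot δ, |d−1⟩ in slot δ+1 (mod n), and |0⟩ elsewhere; together with, for each δ and q ∈ {1,...,d−2}, the state with Σ_j ω^{j}|j⟩ in slot δ, |q⟩ in slot δ+1 (mod n), and |0⟩ elsewhere — are pairwise orthogonal. -/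
/-!
Two product states are orthogonal as soon as one slot carries orthogonal single-site vectors.
States with the same position δ are separated in slot δ by the Fourier vectors (distinct
characters of `ℤ/d`) or in slot `δ + 1` by the basis labels. For δ ≠ δ' the cyclic shift does
it: since `n ≥ 3`, one of the slots `δ + 1`, `δ + 2` carries `|0⟩` in one state and a label
`|d-1⟩` or `|q⟩` with `q ≥ 1` in the other.
-/

noncomputable def rootOfUnity' (d : ℕ) : ℂ := Complex.exp (2 * Real.pi * Complex.I / d)

noncomputable def tensorProdState {n d : ℕ} (f : Fin n → Fin d → ℂ) : (Fin n → Fin d) → ℂ :=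
  fun g => ∏ i, f i (g i)

noncomputable def tensorInner {n d : ℕ} (x y : (Fin n → Fin d) → ℂ) : ℂ :=
  ∑ g : Fin n → Fin d, (starRingEnd ℂ) (x g) * y g

/-- basis vector `|k⟩` in `ℂ^d` (given by a natural number label). -/
def basisVec (d k : ℕ) : Fin d → ℂ := fun j => if (j : ℕ) = k then 1 else 0

/-- the Fourier state `Σ_j ω^{tj}|j⟩` in `ℂ^d`. -/
noncomputable def fourierVec (d t : ℕ) : Fin d → ℂ := fun j => rootOfUnity' d ^ (t * (j : ℕ))

/-- first family of Theorem 1: Fourier state with parameter `t` in slot `δ`,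
`|d-1⟩` in slot `δ+1` (cyclically), `|0⟩` elsewhere. -/
noncomputable def thm1StateA (n d : ℕ) [NeZero n] (δ : Fin n) (t : Fin d) :
    Fin n → Fin d → ℂ :=
  fun i => if i = δ then fourierVec d (t : ℕ)
    else if i = δ + 1 then basisVec d (d - 1) else basisVec d 0

/-- second family of Theorem 1: Fourier state with parameter `1` in slot `δ`,
`|q⟩` in slot `δ+1` (cyclically), `|0⟩` elsewhere. -/
noncomputable def thm1StateB (n d : ℕ) [NeZero n] (δ : Fin n) (q : Fin d) :
    Fin n → Fin d → ℂ :=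
  fun i => if i = δ then fourierVec d 1
    else if i = δ + 1 then basisVec d (q : ℕ) else basisVec d 0

open Finset

theorem tensorInner_tensorProdState {n d : ℕ} (f f' : Fin n → Fin d → ℂ) :
    tensorInner (tensorProdState f) (tensorProdState f') = ∏ i, star (f i) ⬝ᵥ f' i := by
  simp only [tensorInner, tensorProdState, dotProduct, Pi.star_apply, Complex.star_def,
    map_prod, ← prod_mul_distrib]
  rw [prod_univ_sum, Fintype.piFinset_univ]

theorem tensorInner_tensorProdState_eq_zero {n d : ℕ} {f f' : Fin n → Fin d → ℂ} (i : Fin n)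
    (h : star (f i) ⬝ᵥ f' i = 0) : tensorInner (tensorProdState f) (tensorProdState f') = 0 := by
  rw [tensorInner_tensorProdState]
  exact prod_eq_zero (mem_univ i) h

theorem basisVec_orthogonal {d k k' : ℕ} (h : k ≠ k') :
    star (basisVec d k) ⬝ᵥ basisVec d k' = 0 := by
  refine sum_eq_zero fun j _ => ?_
  by_cases hk : (j : ℕ) = k <;> simp [basisVec, hk, h]

theorem geom_sum_eq_zero_of_pow_eq_one {K : Type*} [Field K] {w : K} {d : ℕ} (hw : w ≠ 1)
    (hwd : w ^ d = 1) : ∑ j ∈ range d, w ^ j = 0 := by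
  rw [geom_sum_eq hw, hwd, sub_self, zero_div]

theorem fourierVec_orthogonal {d : ℕ} {t t' : Fin d} (h : t ≠ t') :
    star (fourierVec d t) ⬝ᵥ fourierVec d t' = 0 := by
  have hd : d ≠ 0 := t.pos.ne'
  set ζ := rootOfUnity' d
  have hζ : IsPrimitiveRoot ζ d := Complex.isPrimitiveRoot_exp d hd
  have hζ0 : ζ ≠ 0 := hζ.ne_zero hd
  have hstar : star ζ = ζ⁻¹ := (Complex.inv_eq_conj (hζ.norm'_eq_one hd)).symm
  set w := (ζ ^ (t : ℕ))⁻¹ * ζ ^ (t' : ℕ)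
  have hterm (j : Fin d) : star (fourierVec d t j) * fourierVec d t' j = w ^ (j : ℕ) := by
    change star (ζ ^ _) * ζ ^ _ = _
    simp only [star_pow, hstar, w, mul_pow, inv_pow, ← pow_mul]
  have hw : w ≠ 1 := fun h1 =>
    h (Fin.ext (hζ.pow_inj t.isLt t'.isLt ((inv_mul_eq_one₀ (pow_ne_zero _ hζ0)).mp h1)))
  have hwd : w ^ d = 1 := by
    rw [mul_pow, inv_pow, pow_right_comm ζ (t : ℕ), pow_right_comm ζ (t' : ℕ), hζ.pow_eq_one, one_pow, one_pow, inv_one,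
      one_mul]
  simp only [dotProduct, Pi.star_apply, hterm]
  rw [Fin.sum_univ_eq_sum_range (w ^ ·) d]
  exact geom_sum_eq_zero_of_pow_eq_one hw hwd

theorem Fin.add_one_ne_self {n : ℕ} [NeZero n] (hn : 2 ≤ n) (δ : Fin n) : δ + 1 ≠ δ := by
  rw [Ne, add_eq_left, Fin.ext_iff, Fin.val_one', Fin.val_zero, Nat.mod_eq_of_lt hn]
  exact one_ne_zero

theorem Fin.add_one_add_one_ne_self {n : ℕ} [NeZero n] (hn : 3 ≤ n) (δ : Fin n) :
    δ + 1 + 1 ≠ δ := by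
  rw [Ne, add_assoc, add_eq_left, Fin.ext_iff, Fin.val_add, Fin.val_one',
    Nat.mod_eq_of_lt (by omega : 1 < n), Fin.val_zero, Nat.mod_eq_of_lt (by omega : 1 + 1 < n)]
  exact two_ne_zero

def adjacentPairState {n d : ℕ} [NeZero n] (δ : Fin n) (u v w : Fin d → ℂ) :
    Fin n → Fin d → ℂ :=
  fun i => if i = δ then u else if i = δ + 1 then v else w

section adjacentPairState

variable {n d : ℕ} [NeZero n] {δ δ' : Fin n} {u v w u' v' w' : Fin d → ℂ}

theorem tensorInner_adjacentPairState_eq_zero_of_left (h : star u ⬝ᵥ u' = 0) :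
    tensorInner (tensorProdState (adjacentPairState δ u v w))
      (tensorProdState (adjacentPairState δ u' v' w')) = 0 :=
  tensorInner_tensorProdState_eq_zero δ (by simpa [adjacentPairState] using h)

theorem tensorInner_adjacentPairState_eq_zero_of_right (hn : 2 ≤ n) (h : star v ⬝ᵥ v' = 0) :
    tensorInner (tensorProdState (adjacentPairState δ u v w))
      (tensorProdState (adjacentPairState δ u' v' w')) = 0 :=
  tensorInner_tensorProdState_eq_zero (δ + 1)
    (by simpa [adjacentPairState, Fin.add_one_ne_self hn] using h)

theorem tensorInner_adjacentPairState_eq_zero_of_ne (hn : 3 ≤ n) (hδ : δ ≠ δ')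
    (hvw : star v ⬝ᵥ w = 0) (hwv : star w ⬝ᵥ v' = 0) :
    tensorInner (tensorProdState (adjacentPairState δ u v w))
      (tensorProdState (adjacentPairState δ' u' v' w)) = 0 := by
  have h1 := Fin.add_one_ne_self (by omega : 2 ≤ n)
  have h2 := Fin.add_one_add_one_ne_self hn
  by_cases hnext : δ' = δ + 1
  · subst hnext
    refine tensorInner_tensorProdState_eq_zero (δ + 1 + 1) ?_
    simpa [adjacentPairState, h1, h2] using hwv
  · refine tensorInner_tensorProdState_eq_zero (δ + 1) ?_
    simpa [adjacentPairState, h1, Ne.symm hnext, hδ] using hvw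

end adjacentPairState

theorem thm1StateA_eq_adjacentPairState (n d : ℕ) [NeZero n] (δ : Fin n) (t : Fin d) :
    thm1StateA n d δ t = adjacentPairState δ (fourierVec d t) (basisVec d (d - 1)) (basisVec d 0) :=
  rfl

theorem thm1StateB_eq_adjacentPairState (n d : ℕ) [NeZero n] (δ : Fin n) (q : Fin d) :
    thm1StateB n d δ q = adjacentPairState δ (fourierVec d 1) (basisVec d q) (basisVec d 0) :=
  rfl

theorem thm1_states_pairwise_orthogonal (d n : ℕ) [NeZero n] (hd : 2 ≤ d) (hn : 3 ≤ n) :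
    (∀ δ δ' : Fin n, ∀ t t' : Fin d, (δ, t) ≠ (δ', t') →
      tensorInner (tensorProdState (thm1StateA n d δ t))
        (tensorProdState (thm1StateA n d δ' t')) = 0) ∧
    (∀ δ δ' : Fin n, ∀ q q' : Fin d,
      1 ≤ (q : ℕ) → (q : ℕ) ≤ d - 2 → 1 ≤ (q' : ℕ) → (q' : ℕ) ≤ d - 2 →
      (δ, q) ≠ (δ', q') →
      tensorInner (tensorProdState (thm1StateB n d δ q))
        (tensorProdState (thm1StateB n d δ' q')) = 0) ∧
    (∀ δ δ' : Fin n, ∀ t q : Fin d, 1 ≤ (q : ℕ) → (q : ℕ) ≤ d - 2 →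
      tensorInner (tensorProdState (thm1StateA n d δ t))
        (tensorProdState (thm1StateB n d δ' q)) = 0) := by
  simp only [thm1StateA_eq_adjacentPairState, thm1StateB_eq_adjacentPairState]
  refine ⟨fun δ δ' t t' hne => ?_, fun δ δ' q q' hq _ hq' _ hne => ?_, fun δ δ' t q hq hq' => ?_⟩
  · rcases eq_or_ne δ δ' with rfl | hδ
    · exact tensorInner_adjacentPairState_eq_zero_of_left
        (fourierVec_orthogonal (by simpa using hne))
    · exact tensorInner_adjacentPairState_eq_zero_of_ne hn hδ
        (basisVec_orthogonal (by omega)) (basisVec_orthogonal (by omega))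
  · rcases eq_or_ne δ δ' with rfl | hδ
    · exact tensorInner_adjacentPairState_eq_zero_of_right (by omega)
        (basisVec_orthogonal (by simpa [Fin.val_inj] using hne))
    · exact tensorInner_adjacentPairState_eq_zero_of_ne hn hδ
        (basisVec_orthogonal (by omega)) (basisVec_orthogonal (by omega))
  · rcases eq_or_ne δ δ' with rfl | hδ
    · exact tensorInner_adjacentPairState_eq_zero_of_right (by omega)
        (basisVec_orthogonal (by omega))
    · exact tensorInner_adjacentPairState_eq_zero_of_ne hn hδ
        (basisVec_orthogonal (by omega)) (basisVec_orthogonal (by omega))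
end
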